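/- arXiv:2306.11802 — 2 statements merged into one kernel-verified Lean document; each statement's English description precedes it below -/
import Mathlib

section
/- For all real x ∈ [−1,1] and real z with |z| > 1, the series (1/√(z²−1)) + (2/√(z²−1))·Σ_{ℓ=1}^∞ (−1)^ℓ/(z+√(z²−1))^ℓ · T_ℓ(x) converges to 1/(x+z), where T_ℓ is the ℓ-th Chebyshev polynomial of the first kind (assume z > 1 for definiteness). -/
/-!
Put `t = √(z²-1) - z`. Since `t (z + √(z²-1)) = -1`, the `ℓ`-th coefficient of the series is
`(2/√(z²-1)) t^ℓ`, and `|t| < 1`. Writing `x = cos θ`, the generating function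
`∑ t^n Tₙ(x) = (1 - t x) / (1 - 2 t x + t²)` is the real part of the geometric series
`∑ (t e^{iθ})^n`. As `t² + 2 z t + 1 = 0`, the denominator is `-2 t (x + z)`, and the value
`1/(x+z)` drops out.
-/

open Real Polynomial.Chebyshev

theorem hasSum_pow_mul_cos {t : ℝ} (ht : |t| < 1) (θ : ℝ) :
    HasSum (fun n : ℕ => t ^ n * cos (n * θ))
      ((1 - t * cos θ) / (1 - 2 * t * cos θ + t ^ 2)) := by
  have hw : ‖(t : ℂ) * Complex.exp (θ * Complex.I)‖ < 1 := by
    rwa [norm_mul, Complex.norm_exp_ofReal_mul_I, mul_one, Complex.norm_real, Real.norm_eq_abs]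
  convert Complex.hasSum_re (hasSum_geometric_of_norm_lt_one hw) using 1
  · ext n
    rw [mul_pow, ← Complex.exp_nat_mul, ← mul_assoc, ← Complex.ofReal_natCast, ← Complex.ofReal_pow,
      ← Complex.ofReal_mul, Complex.re_ofReal_mul, Complex.exp_ofReal_mul_I_re]
  · rw [Complex.inv_re, Complex.normSq_apply]
    simp only [Complex.sub_re, Complex.sub_im, Complex.one_re, Complex.one_im, Complex.re_ofReal_mul,
      Complex.im_ofReal_mul, Complex.exp_ofReal_mul_I_re, Complex.exp_ofReal_mul_I_im]
    congr 1
    linear_combination -t ^ 2 * sin_sq_add_cos_sq θ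

theorem hasSum_pow_mul_chebyshevT {x t : ℝ} (hx : x ∈ Set.Icc (-1 : ℝ) 1) (ht : |t| < 1) :
    HasSum (fun n : ℕ => t ^ n * (T ℝ n).eval x) ((1 - t * x) / (1 - 2 * t * x + t ^ 2)) := by
  rw [← cos_arccos hx.1 hx.2]
  simpa only [T_real_cos, Int.cast_natCast] using hasSum_pow_mul_cos ht (arccos x)

/-- Chebyshev expansion of `1/(x+z)`: for `x ∈ [−1,1]` and `z > 1`,
`1/√(z²−1) + (2/√(z²−1))·Σ_{ℓ≥1} (−1)^ℓ (z+√(z²−1))^{−ℓ} T_ℓ(x) = 1/(x+z)`. -/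
theorem stmt_13 (x z : ℝ) (hx : x ∈ Set.Icc (-1 : ℝ) 1) (hz : 1 < z) :
    HasSum (fun ℓ : ℕ =>
      2 / Real.sqrt (z ^ 2 - 1) *
        ((-1 : ℝ) ^ (ℓ + 1) / (z + Real.sqrt (z ^ 2 - 1)) ^ (ℓ + 1)) *
        (Polynomial.Chebyshev.T ℝ ((ℓ : ℤ) + 1)).eval x)
      (1 / (x + z) - 1 / Real.sqrt (z ^ 2 - 1)) := by
  set s := √(z ^ 2 - 1)
  have hs : s ^ 2 = z ^ 2 - 1 := sq_sqrt (by nlinarith)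
  have hs0 : 0 < s := sqrt_pos.2 (by nlinarith)
  have hsz : s < z := by nlinarith
  set t := s - z
  have ht : |t| < 1 := abs_lt.2 ⟨by nlinarith, by linarith⟩
  have htz : t * (z + s) = -1 := by linear_combination hs
  have hinv : -1 / (z + s) = t := (eq_div_of_mul_eq (by linarith) htz).symm
  have hD : 1 - 2 * t * x + t ^ 2 = -2 * t * (x + z) := by linear_combination htz
  have hsum := ((hasSum_nat_add_iff' 1).2 (hasSum_pow_mul_chebyshevT hx ht)).mul_left (2 / s)
  have hval : 1 / (x + z) - 1 / s = 2 / s * ((1 - t * x) / (1 - 2 * t * x + t ^ 2) -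
      ∑ n ∈ Finset.range 1, t ^ n * (T ℝ n).eval x) := by
    have hxz : 0 < x + z := by linarith [hx.1]
    have ht0 : t ≠ 0 := by linarith
    rw [Finset.sum_range_one, pow_zero, Nat.cast_zero, T_zero, Polynomial.eval_one, hD]
    field_simp
    linear_combination htz
  rw [hval]
  refine hsum.congr_fun fun ℓ => ?_
  rw [← div_pow, hinv]
  push_cast
  ring
end

section
/- Let A be Hermitian positive-definite on ℂ^N with ‖A‖ ≤ 1, W unitary, P Hermitian with 0 < P ≤ I, and A_p = P W A W* P with eigenvalues in [1/κ_p, 1]. Let b be a unit vector, and define ψ_{ab} := W*·U^a·A_p⁻¹·U^b·W·b for a,b ∈ {0,1}, where U⁰ = U⁺, U¹ = U⁻, U± = P ± i√(I−P²). Then (1/4)·Σ_{a,b∈{0,1}} ψ_{ab} = W*·P·A_p⁻¹·P·W·b, and moreover W*·P·A_p⁻¹·P·W = A⁻¹, so that (1/4)·Σ_{a,b∈{0,1}} ψ_{ab} = A⁻¹·b. -/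
open scoped ComplexOrder

open Matrix
open scoped Matrix.Norms.L2Operator

/-- The square root of a positive semidefinite matrix, as `Matrix.PosSemidef.sqrt` was defined
in the older Mathlib. -/
noncomputable def Matrix.PosSemidef.oldSqrt {n : Type*} [Fintype n] [DecidableEq n]
    {A : Matrix n n ℂ} (hA : A.PosSemidef) : Matrix n n ℂ :=
  (hA.1.eigenvectorUnitary : Matrix n n ℂ) * diagonal ((↑) ∘ Real.sqrt ∘ hA.1.eigenvalues) *
    (star hA.1.eigenvectorUnitary : Matrix n n ℂ)

/-- With `ψ_{ab} = W* U^a A_p⁻¹ U^b W b` for `U⁰ = U⁺`, `U¹ = U⁻`, one has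
`(1/4)·Σ_{ab} ψ_{ab} = W* P A_p⁻¹ P W b`, and moreover `W* P A_p⁻¹ P W = A⁻¹`. -/
theorem stmt_19 {N : ℕ} (A W P : Matrix (Fin N) (Fin N) ℂ)
    (hA : A.PosDef) (hAn : ‖A‖ ≤ 1)
    (hW : W ∈ Matrix.unitaryGroup (Fin N) ℂ)
    (hP : P.PosDef)
    (hPle : ((1 : Matrix (Fin N) (Fin N) ℂ) - P).PosSemidef)
    (hQ : ((1 : Matrix (Fin N) (Fin N) ℂ) - P ^ 2).PosSemidef)
    (κp : ℝ) (hκ : 1 ≤ κp)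
    (hAp : (P * W * A * Wᴴ * P).IsHermitian)
    (heig : ∀ i, hAp.eigenvalues i ∈ Set.Icc (1 / κp) 1)
    (bvec : EuclideanSpace ℂ (Fin N)) (hb : ‖bvec‖ = 1)
    (U : Fin 2 → Matrix (Fin N) (Fin N) ℂ)
    (hU0 : U 0 = P + Complex.I • hQ.oldSqrt)
    (hU1 : U 1 = P - Complex.I • hQ.oldSqrt)
    (ψ : Fin 2 → Fin 2 → (Fin N → ℂ))
    (hψ : ∀ a b, ψ a b =
      (Wᴴ * U a * (P * W * A * Wᴴ * P)⁻¹ * U b * W) *ᵥ (WithLp.equiv 2 (Fin N → ℂ)) bvec) :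
    (1 / 4 : ℂ) • ∑ a : Fin 2, ∑ b : Fin 2, ψ a b =
      (Wᴴ * P * (P * W * A * Wᴴ * P)⁻¹ * P * W) *ᵥ (WithLp.equiv 2 (Fin N → ℂ)) bvec ∧
    Wᴴ * P * (P * W * A * Wᴴ * P)⁻¹ * P * W = A⁻¹ := by
  have hWW : Wᴴ * W = 1 := by
    simpa [Matrix.star_eq_conjTranspose] using hW.1
  have hWW' : W * Wᴴ = 1 := by
    simpa [Matrix.star_eq_conjTranspose] using hW.2
  have hPu := hP.isUnit
  have hAu := hA.isUnit
  have := hPu.invertible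
  have := hAu.invertible
  -- inverse of A_p
  have hinv : (P * W * A * Wᴴ * P)⁻¹ = P⁻¹ * W * A⁻¹ * Wᴴ * P⁻¹ := by
    apply Matrix.inv_eq_right_inv
    calc P * W * A * Wᴴ * P * (P⁻¹ * W * A⁻¹ * Wᴴ * P⁻¹)
        = P * W * A * ((Wᴴ * (P * P⁻¹)) * W) * A⁻¹ * Wᴴ * P⁻¹ := by
          noncomm_ring
      _ = 1 := by
          rw [Matrix.mul_inv_of_invertible P, mul_one, hWW,
            Matrix.mul_assoc (P * W * A) 1, one_mul,
            Matrix.mul_nonsing_inv_cancel_right _ _ (Matrix.isUnit_iff_isUnit_det _ |>.1 hAu),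
            Matrix.mul_assoc P W, hWW', mul_one, Matrix.mul_inv_of_invertible]
  have key : Wᴴ * P * (P * W * A * Wᴴ * P)⁻¹ * P * W = A⁻¹ := by
    rw [hinv]
    calc Wᴴ * P * (P⁻¹ * W * A⁻¹ * Wᴴ * P⁻¹) * P * W
        = (Wᴴ * (P * P⁻¹) * W) * A⁻¹ * (Wᴴ * (P⁻¹ * P) * W) := by noncomm_ring
      _ = A⁻¹ := by
          rw [Matrix.mul_inv_of_invertible, Matrix.inv_mul_of_invertible]
          simp [hWW]
  refine ⟨?_, key⟩
  have hmat : ∑ a : Fin 2, ∑ b : Fin 2,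
      (Wᴴ * U a * (P * W * A * Wᴴ * P)⁻¹ * U b * W)
      = (4 : ℂ) • (Wᴴ * P * (P * W * A * Wᴴ * P)⁻¹ * P * W) := by
    simp only [Fin.sum_univ_two, hU0, hU1]
    set S := hQ.oldSqrt
    set M := (P * W * A * Wᴴ * P)⁻¹
    simp only [mul_add, add_mul, mul_sub, sub_mul, Matrix.mul_smul, Matrix.smul_mul,
      smul_smul]
    module
  calc (1 / 4 : ℂ) • ∑ a : Fin 2, ∑ b : Fin 2, ψ a b
      = (1 / 4 : ℂ) • ((∑ a : Fin 2, ∑ b : Fin 2,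
          (Wᴴ * U a * (P * W * A * Wᴴ * P)⁻¹ * U b * W)) *ᵥ (WithLp.equiv 2 (Fin N → ℂ)) bvec) := by
        simp only [hψ, Fin.sum_univ_two, Matrix.add_mulVec]
    _ = _ := by
        rw [hmat, Matrix.smul_mulVec, smul_smul]
        norm_num
end
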